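/- arXiv:2012.13245 — 3 statements merged into one kernel-verified Lean document; each statement's English description precedes it below -/
import Mathlib

section
/- Let E be a finite ground set, θ ∈ ℝ^d, β ∈ ℝ^m, R_1, …, R_d modular functions on subsets of E, and h_1, …, h_m distance metrics on E with associated dispersion functions V_1, …, V_m. Assume that Σ_{i=1}^d θ_i R_i({a}) ≥ 0 for every a ∈ E and that β is componentwise nonnegative. Let A^greedy be the set produced by the greedy algorithm that starts from A = ∅ and, for K steps, adds an element a ∈ E \ A maximizing the marginal gain η^T Δ(a|A) = Σ_{i=1}^d θ_i R_i({a}) + Σ_{i=1}^m β_i Σ_{j∈A} h_i(a,j). Then F(A^greedy|η) ≥ (1/4) · max_{A ⊆ E, |A| ≤ K} F(A|η). -/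
/-!
Fix `B ⊆ E` with `|B| ≤ K` and write `t = |B \ A k|`, `u = |A k \ B|`. Averaging the greedy
choice over `B \ A k` and bounding the dispersion inside `B \ A k` through `A k \ B` by the
triangle inequality, one greedy step closes at least the fraction `ρ(t, u)` of the gap
`F B - F (A k)`, where `ρ = 1/t` if `t ≤ u + 1` and `ρ = u / (t (t - 1))` otherwise. Each step
either decreases `t` or increases `u`, starting from `(|B|, 0)`; a potential function shows that
the fractions collected along any such path of length `K` add up to at least `1/2`. Hence
`F B - F (A K) ≤ 2 F (A K)`, i.e. the greedy set is even a `1/3`-approximation.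
-/

namespace GreedyDispersion

open Finset

theorem sum_mul_sum_eq_sum_sum_mul {κ α : Type*} (s : Finset κ) (t : Finset α) (c : κ → ℝ)
    (f : κ → α → ℝ) : ∑ i ∈ s, c i * ∑ a ∈ t, f i a = ∑ a ∈ t, ∑ i ∈ s, c i * f i a := by
  simp only [mul_sum]
  exact sum_comm

section Pseudometric

variable {ι : Type*}

structure IsPseudometric (D : ι → ι → ℝ) : Prop where
  symm : ∀ a b, D a b = D b a
  self : ∀ a, D a a = 0
  triangle : ∀ a b c, D a c ≤ D a b + D b c

namespace IsPseudometric

variable {D : ι → ι → ℝ}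

theorem nonneg (hD : IsPseudometric D) (a b : ι) : 0 ≤ D a b := by
  have := hD.triangle a b a
  rw [hD.self, hD.symm b a] at this
  linarith

theorem weightedSum {κ : Type*} [Fintype κ] {β : κ → ℝ} {h : κ → ι → ι → ℝ}
    (hβ : ∀ i, 0 ≤ β i) (hh : ∀ i, IsPseudometric (h i)) :
    IsPseudometric fun a b => ∑ i, β i * h i a b where
  symm a b := sum_congr rfl fun i _ => by rw [(hh i).symm]
  self a := sum_eq_zero fun i _ => by rw [(hh i).self, mul_zero]
  triangle a b c := by
    rw [← sum_add_distrib]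
    exact sum_le_sum fun i _ => by
      rw [← mul_add]
      exact mul_le_mul_of_nonneg_left ((hh i).triangle a b c) (hβ i)

theorem card_mul_le_sum_add_sum (hD : IsPseudometric D) (X : Finset ι) (b b' : ι) :
    #X * D b b' ≤ ∑ j ∈ X, D b j + ∑ j ∈ X, D b' j := by
  rw [← sum_add_distrib, ← nsmul_eq_mul, ← sum_const]
  exact sum_le_sum fun j _ => hD.symm b' j ▸ hD.triangle b j b'

end IsPseudometric

end Pseudometric

section CrossSum

variable {ι : Type*} {D : ι → ι → ℝ}

def crossSum (D : ι → ι → ℝ) (S T : Finset ι) : ℝ := ∑ a ∈ S, ∑ b ∈ T, D a b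

theorem crossSum_nonneg (hD : ∀ a b, 0 ≤ D a b) (S T : Finset ι) : 0 ≤ crossSum D S T :=
  sum_nonneg fun a _ => sum_nonneg fun b _ => hD a b

theorem crossSum_comm (hD : ∀ a b, D a b = D b a) (S T : Finset ι) :
    crossSum D S T = crossSum D T S := by
  rw [crossSum, sum_comm]
  exact sum_congr rfl fun a _ => sum_congr rfl fun b _ => hD b a

theorem crossSum_self_eq_zero (hD : ∀ a, D a a = 0) {T : Finset ι} (hT : #T ≤ 1) :
    crossSum D T T = 0 :=
  sum_eq_zero fun a ha => sum_eq_zero fun b hb => by rw [card_le_one.mp hT a ha b hb, hD]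

theorem IsPseudometric.card_mul_crossSum_self_le (hD : IsPseudometric D) (T X : Finset ι) :
    #X * crossSum D T T ≤ 2 * (#T - 1) * crossSum D T X := by
  classical
  have hoff : crossSum D T T = ∑ b ∈ T, ∑ b' ∈ T.erase b, D b b' :=
    sum_congr rfl fun b hb => by rw [← add_sum_erase T _ hb, hD.self, zero_add]
  calc #X * crossSum D T T = ∑ b ∈ T, ∑ b' ∈ T.erase b, #X * D b b' := by
        simp only [hoff, mul_sum]
    _ ≤ ∑ b ∈ T, ∑ b' ∈ T.erase b, (∑ j ∈ X, D b j + ∑ j ∈ X, D b' j) :=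
        sum_le_sum fun b _ => sum_le_sum fun b' _ => hD.card_mul_le_sum_add_sum X b b'
    _ = ∑ b ∈ T, ((#T - 1) * ∑ j ∈ X, D b j + (crossSum D T X - ∑ j ∈ X, D b j)) := by
        refine sum_congr rfl fun b hb => ?_
        rw [sum_add_distrib, sum_const, nsmul_eq_mul, card_erase_of_mem hb,
          Nat.cast_pred (card_pos.mpr ⟨b, hb⟩), crossSum, sum_erase_eq_sub hb]
    _ = 2 * (#T - 1) * crossSum D T X := by
        rw [sum_add_distrib, ← mul_sum, sum_sub_distrib, sum_const, nsmul_eq_mul, crossSum]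
        ring

theorem IsPseudometric.crossSum_self_le (hD : IsPseudometric D) {T X : Finset ι}
    (h : #T ≤ #X + 1) : crossSum D T T ≤ 2 * crossSum D T X := by
  rcases le_or_gt #T 1 with hT | hT
  · rw [crossSum_self_eq_zero hD.self hT]
    linarith [crossSum_nonneg hD.nonneg T X]
  · have hX : (#T : ℝ) - 1 ≤ #X := by
      rw [sub_le_iff_le_add]; exact_mod_cast h
    have hT : (0 : ℝ) < #T - 1 := by
      rw [sub_pos]; exact_mod_cast hT
    have := hD.card_mul_crossSum_self_le T X
    nlinarith [crossSum_nonneg hD.nonneg T T]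

variable [DecidableEq ι]

theorem crossSum_union_left {S T : Finset ι} (h : Disjoint S T) (U : Finset ι) :
    crossSum D (S ∪ T) U = crossSum D S U + crossSum D T U :=
  sum_union h

theorem crossSum_union_right {S T : Finset ι} (h : Disjoint S T) (U : Finset ι) :
    crossSum D U (S ∪ T) = crossSum D U S + crossSum D U T := by
  simp only [crossSum, sum_union h, sum_add_distrib]

end CrossSum

section Utility

variable {ι : Type*} {L : ι → ℝ} {D : ι → ι → ℝ}

noncomputable def utility (L : ι → ℝ) (D : ι → ι → ℝ) (S : Finset ι) : ℝ :=
  ∑ a ∈ S, L a + crossSum D S S / 2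

def marginalGain (L : ι → ℝ) (D : ι → ι → ℝ) (S : Finset ι) (a : ι) : ℝ :=
  L a + ∑ j ∈ S, D a j

theorem utility_empty : utility L D ∅ = 0 := by
  simp [utility, crossSum]

theorem utility_nonneg {S : Finset ι} (hL : ∀ a ∈ S, 0 ≤ L a) (hD : ∀ a b, 0 ≤ D a b) :
    0 ≤ utility L D S :=
  add_nonneg (sum_nonneg hL) (div_nonneg (crossSum_nonneg hD S S) zero_le_two)

theorem marginalGain_nonneg {S : Finset ι} {a : ι} (hL : 0 ≤ L a) (hD : ∀ a b, 0 ≤ D a b) :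
    0 ≤ marginalGain L D S a :=
  add_nonneg hL (sum_nonneg fun j _ => hD a j)

variable [DecidableEq ι]

theorem utility_union (hD : ∀ a b, D a b = D b a) {S T : Finset ι} (h : Disjoint S T) :
    utility L D (S ∪ T) = utility L D S + utility L D T + crossSum D S T := by
  rw [utility, utility, utility, sum_union h, crossSum_union_left h, crossSum_union_right h,
    crossSum_union_right h, crossSum_comm hD T S]
  ring

theorem utility_insert (hD : IsPseudometric D) {S : Finset ι} {a : ι} (ha : a ∉ S) :
    utility L D (insert a S) = utility L D S + marginalGain L D S a := by
  rw [insert_eq, utility_union hD.symm (disjoint_singleton_left.mpr ha)]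
  simp only [utility, sum_singleton, crossSum, hD.self, zero_div, add_zero, marginalGain]
  ring

theorem utility_sub_le (hD : IsPseudometric D) {B S : Finset ι} (hL : ∀ a ∈ S \ B, 0 ≤ L a) :
    utility L D B - utility L D S ≤
      ∑ b ∈ B \ S, L b + crossSum D (B \ S) (S ∩ B) + crossSum D (B \ S) (B \ S) / 2 := by
  have hB := utility_union (L := L) hD.symm (disjoint_sdiff_inter B S)
  have hS := utility_union (L := L) hD.symm (disjoint_sdiff_inter S B)
  rw [sdiff_union_inter, inter_comm] at hB
  rw [sdiff_union_inter] at hS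
  rw [hB, hS, utility]
  linarith [utility_nonneg hL hD.nonneg, crossSum_nonneg hD.nonneg (S \ B) (S ∩ B)]

end Utility

noncomputable def greedyRate (t u : ℕ) : ℝ :=
  if t ≤ u + 1 then (t : ℝ)⁻¹ else u / (t * (t - 1))

/-- A lower bound for the total `greedyRate` collected along any path `(t, u) → (t - 1, u)` or
`(t, u) → (t, u + 1)` that ends with `t ≤ u`. At `(1, 0)` the division is by zero and the value
is `1 / 2`, which is all that is needed there. -/
noncomputable def greedyPotential (t u : ℕ) : ℝ :=
  if t ≤ u then 0 else 1 / 2 - u * (u - 1) / (2 * t * (t - 1))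

theorem greedyPotential_of_le {t u : ℕ} (h : t ≤ u) : greedyPotential t u = 0 := if_pos h

theorem greedyPotential_of_lt {t u : ℕ} (h : u < t) :
    greedyPotential t u = 1 / 2 - u * (u - 1) / (2 * t * (t - 1)) := if_neg h.not_ge

theorem greedyRate_nonneg (t u : ℕ) : 0 ≤ greedyRate t u := by
  unfold greedyRate
  split_ifs with h
  · positivity
  · have : (1 : ℝ) ≤ t := by exact_mod_cast (by omega : 1 ≤ t)
    have : 0 ≤ (t : ℝ) - 1 := by linarith
    positivity

theorem greedyPotential_succ_le_inv (u : ℕ) :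
    greedyPotential (u + 1) u ≤ ((u + 1 : ℕ) : ℝ)⁻¹ := by
  rcases u.eq_zero_or_pos with rfl | hu
  · norm_num [greedyPotential]
  · have hu : (u : ℝ) ≠ 0 := by positivity
    rw [greedyPotential_of_lt (by omega)]
    push_cast
    rw [add_sub_cancel_right]
    apply le_of_eq
    field_simp
    ring

theorem greedyPotential_le_greedyRate_add_succ (t u : ℕ) :
    greedyPotential t u ≤ greedyRate t u + greedyPotential t (u + 1) := by
  rcases le_or_gt t u with htu | htu
  · rw [greedyPotential_of_le htu, greedyPotential_of_le (by omega)]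
    linarith [greedyRate_nonneg t u]
  rcases (Nat.succ_le_of_lt htu).lt_or_eq with htu | rfl
  · have ht : (u : ℝ) + 2 ≤ t := by exact_mod_cast htu
    rw [greedyPotential_of_lt (by omega), greedyRate, if_neg (by omega),
      greedyPotential_of_lt (by omega)]
    have : (t : ℝ) * (t - 1) ≠ 0 := by
      have : (0 : ℝ) < t * (t - 1) := by nlinarith
      exact this.ne'
    apply le_of_eq
    push_cast
    field_simp
    ring
  · rw [greedyRate, if_pos le_rfl, greedyPotential_of_le le_rfl, add_zero]
    exact greedyPotential_succ_le_inv u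

theorem greedyPotential_succ_le_greedyRate_add (t u : ℕ) :
    greedyPotential (t + 1) u ≤ greedyRate (t + 1) u + greedyPotential t u := by
  rcases le_or_gt (t + 1) u with htu | htu
  · rw [greedyPotential_of_le htu, greedyPotential_of_le (by omega)]
    linarith [greedyRate_nonneg (t + 1) u]
  rcases (Nat.lt_succ_iff.mp htu).lt_or_eq with htu | rfl
  · rw [greedyPotential_of_lt (by omega), greedyRate, if_neg (by omega),
      greedyPotential_of_lt htu]
    rcases u.eq_zero_or_pos with rfl | hu
    · simp
    have hu : (1 : ℝ) ≤ u := by exact_mod_cast hu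
    have ht : (u : ℝ) + 1 ≤ t := by exact_mod_cast htu
    push_cast
    rw [← sub_nonneg, add_sub_cancel_right]
    have key : ((u : ℝ) / ((t + 1) * t) + (1 / 2 - u * (u - 1) / (2 * t * (t - 1))) -
        (1 / 2 - u * (u - 1) / (2 * (t + 1) * t)))
        = u * (t - u) / (t * (t + 1) * (t - 1)) := by
      have : (t : ℝ) - 1 ≠ 0 := by linarith
      have : (t : ℝ) ≠ 0 := by linarith
      have : (t : ℝ) + 1 ≠ 0 := by linarith
      field_simp
      ring
    rw [key]
    have : (0 : ℝ) ≤ t - 1 := by linarith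
    have : (0 : ℝ) ≤ t - u := by linarith
    positivity
  · rw [greedyRate, if_pos le_rfl, greedyPotential_of_le le_rfl, add_zero]
    exact greedyPotential_succ_le_inv u

theorem greedyPotential_le_greedyRate_add {t u t' u' : ℕ}
    (h : (t = t' + 1 ∧ u' = u) ∨ (t' = t ∧ u' = u + 1)) :
    greedyPotential t u ≤ greedyRate t u + greedyPotential t' u' := by
  rcases h with ⟨rfl, rfl⟩ | ⟨rfl, rfl⟩
  · exact greedyPotential_succ_le_greedyRate_add _ _
  · exact greedyPotential_le_greedyRate_add_succ _ _

theorem greedyPotential_le_sum_greedyRate {K : ℕ} {t u : ℕ → ℕ}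
    (hstep : ∀ k < K, (t k = t (k + 1) + 1 ∧ u (k + 1) = u k) ∨
      (t (k + 1) = t k ∧ u (k + 1) = u k + 1))
    (hK : t 0 ≤ u 0 + K) :
    greedyPotential (t 0) (u 0) ≤ ∑ k ∈ range K, greedyRate (t k) (u k) := by
  induction K generalizing t u with
  | zero => simp [greedyPotential_of_le (by simpa using hK)]
  | succ K ih =>
    have h0 := hstep 0 K.succ_pos
    have hrest := ih (t := fun k => t (k + 1)) (u := fun k => u (k + 1))
      (fun k hk => hstep (k + 1) (by omega)) (by omega)
    rw [sum_range_succ']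
    linarith [greedyPotential_le_greedyRate_add h0]

theorem greedyPotential_zero_right {t : ℕ} (ht : 0 < t) : greedyPotential t 0 = 1 / 2 := by
  simp [greedyPotential, ht.ne']

theorem sum_mul_le_sub_of_mul_le_sub {K : ℕ} {x ρ : ℕ → ℝ} (hρ : ∀ k < K, 0 ≤ ρ k)
    (hx : ∀ k < K, x (k + 1) ≤ x k) (hρx : ∀ k < K, ρ k * x k ≤ x k - x (k + 1)) :
    (∑ k ∈ range K, ρ k) * x K ≤ x 0 - x K := by
  induction K with
  | zero => simp
  | succ K ih =>
    have ih := ih (fun k hk => hρ k (by omega)) (fun k hk => hx k (by omega))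
      (fun k hk => hρx k (by omega))
    have hsum : 0 ≤ ∑ k ∈ range K, ρ k :=
      sum_nonneg fun k hk => hρ k (by rw [mem_range] at hk; omega)
    rw [sum_range_succ, add_mul]
    linarith [mul_le_mul_of_nonneg_left (hx K K.lt_succ_self) hsum,
      mul_le_mul_of_nonneg_left (hx K K.lt_succ_self) (hρ K K.lt_succ_self),
      hρx K K.lt_succ_self]

section Greedy

variable {ι : Type*} [DecidableEq ι] {L : ι → ℝ} {D : ι → ι → ℝ}

theorem greedyRate_mul_utility_sub_le (hD : IsPseudometric D) {B S : Finset ι}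
    (hL : ∀ a ∈ B ∪ S, 0 ≤ L a) {γ : ℝ} (hγ : 0 ≤ γ)
    (hgain : ∀ b ∈ B \ S, marginalGain L D S b ≤ γ) :
    greedyRate #(B \ S) #(S \ B) * (utility L D B - utility L D S) ≤ γ := by
  set T := B \ S
  set X := S \ B
  have hgap := utility_sub_le hD (L := L) (B := B) (S := S) fun a ha =>
    hL a (mem_union_right B (mem_sdiff.mp ha).1)
  have hsum : ∑ b ∈ T, L b + crossSum D T (S ∩ B) + crossSum D T X ≤ #T * γ := by
    have hS := crossSum_union_right (D := D) (disjoint_sdiff_inter S B) T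
    rw [sdiff_union_inter] at hS
    have hT : ∑ b ∈ T, marginalGain L D S b = ∑ b ∈ T, L b + crossSum D T S := sum_add_distrib
    have := sum_le_card_nsmul T (marginalGain L D S) γ hgain
    rw [nsmul_eq_mul] at this
    linarith
  have hLT : 0 ≤ ∑ b ∈ T, L b :=
    sum_nonneg fun b hb => hL b (mem_union_left S (mem_sdiff.mp hb).1)
  have hI := crossSum_nonneg hD.nonneg T (S ∩ B)
  unfold greedyRate
  split_ifs with hsat
  · have hTT := hD.crossSum_self_le hsat
    rcases (#T).eq_zero_or_pos with h0 | hpos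
    · simp [h0, hγ]
    · rw [inv_mul_le_iff₀ (by exact_mod_cast hpos)]
      linarith
  · have hTT := hD.card_mul_crossSum_self_le T X
    have hX : (#X : ℝ) + 1 ≤ #T - 1 := by
      rw [le_sub_iff_add_le]; exact_mod_cast (by omega : #X + 1 + 1 ≤ #T)
    have hX0 : (0 : ℝ) ≤ #X := Nat.cast_nonneg _
    have hXT : (#X : ℝ) ≤ #T - 1 := by linarith
    have hT1 : (0 : ℝ) ≤ #T - 1 := by linarith
    rw [div_mul_eq_mul_div, div_le_iff₀ (by nlinarith)]
    nlinarith [mul_le_mul_of_nonneg_left hgap hX0, mul_le_mul_of_nonneg_right hXT hLT,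
      mul_le_mul_of_nonneg_right hXT hI, mul_le_mul_of_nonneg_left hsum hT1]

theorem card_sdiff_insert_cases {S : Finset ι} {a : ι} (ha : a ∉ S) (B : Finset ι) :
    (#(B \ S) = #(B \ insert a S) + 1 ∧ #(insert a S \ B) = #(S \ B)) ∨
      (#(B \ insert a S) = #(B \ S) ∧ #(insert a S \ B) = #(S \ B) + 1) := by
  rw [sdiff_insert]
  by_cases haB : a ∈ B
  · left
    rw [card_erase_add_one (mem_sdiff.mpr ⟨haB, ha⟩), insert_sdiff_of_mem S haB]
    exact ⟨rfl, rfl⟩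
  · right
    rw [erase_eq_of_notMem fun h => haB (mem_sdiff.mp h).1, insert_sdiff_of_notMem S haB,
      card_insert_of_notMem fun h => ha (mem_sdiff.mp h).1]
    exact ⟨rfl, rfl⟩

structure IsGreedyRun (L : ι → ℝ) (D : ι → ι → ℝ) (E : Finset ι) (K : ℕ) (g : ℕ → ι)
    (A : ℕ → Finset ι) : Prop where
  zero : A 0 = ∅
  succ : ∀ k < K, A (k + 1) = insert (g k) (A k)
  mem : ∀ k < K, g k ∈ E \ A k
  gain_le : ∀ k < K, ∀ b ∈ E \ A k, marginalGain L D (A k) b ≤ marginalGain L D (A k) (g k)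

namespace IsGreedyRun

variable {E : Finset ι} {K : ℕ} {g : ℕ → ι} {A : ℕ → Finset ι}

theorem subset (hrun : IsGreedyRun L D E K g A) {k : ℕ} (hk : k ≤ K) : A k ⊆ E := by
  induction k with
  | zero => simp [hrun.zero]
  | succ k ih =>
    rw [hrun.succ k hk]
    exact insert_subset (mem_sdiff.mp (hrun.mem k hk)).1 (ih (by omega))

theorem utility_nonneg (hrun : IsGreedyRun L D E K g A) (hL : ∀ a ∈ E, 0 ≤ L a)
    (hD : ∀ a b, 0 ≤ D a b) : 0 ≤ utility L D (A K) :=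
  GreedyDispersion.utility_nonneg (fun a ha => hL a (hrun.subset le_rfl ha)) hD

theorem utility_le_three_mul (hrun : IsGreedyRun L D E K g A) (hL : ∀ a ∈ E, 0 ≤ L a)
    (hD : IsPseudometric D) {B : Finset ι} (hBE : B ⊆ E) (hBK : #B ≤ K) :
    utility L D B ≤ 3 * utility L D (A K) := by
  set x : ℕ → ℝ := fun k => utility L D B - utility L D (A k)
  have hgain : ∀ k < K, x k - x (k + 1) = marginalGain L D (A k) (g k) := fun k hk => by
    simp only [x, hrun.succ k hk, utility_insert hD (mem_sdiff.mp (hrun.mem k hk)).2]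
    ring
  have hgain_nonneg : ∀ k < K, 0 ≤ marginalGain L D (A k) (g k) := fun k hk =>
    marginalGain_nonneg (hL _ (mem_sdiff.mp (hrun.mem k hk)).1) hD.nonneg
  have hrate := sum_mul_le_sub_of_mul_le_sub (x := x) (K := K)
    (fun k _ => greedyRate_nonneg #(B \ A k) #(A k \ B))
    (fun k hk => by linarith [hgain k hk, hgain_nonneg k hk])
    (fun k hk => hgain k hk ▸ greedyRate_mul_utility_sub_le hD
      (fun a ha => hL a (union_subset hBE (hrun.subset hk.le) ha)) (hgain_nonneg k hk)
      fun b hb => hrun.gain_le k hk b (sdiff_subset_sdiff hBE le_rfl hb))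
  have hpot := greedyPotential_le_sum_greedyRate (K := K)
    (t := fun k => #(B \ A k)) (u := fun k => #(A k \ B))
    (fun k hk => hrun.succ k hk ▸ card_sdiff_insert_cases (mem_sdiff.mp (hrun.mem k hk)).2 B)
    (by simpa [hrun.zero] using hBK)
  have hA := hrun.utility_nonneg hL hD.nonneg
  simp only [x, hrun.zero, utility_empty, sub_zero, sub_sub_cancel] at hrate
  rcases B.eq_empty_or_nonempty with rfl | hB
  · rw [utility_empty]; linarith
  simp only [hrun.zero, sdiff_empty, empty_sdiff, card_empty,
    greedyPotential_zero_right hB.card_pos] at hpot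
  rcases le_or_gt (utility L D B) (utility L D (A K)) with hle | hgt
  · linarith
  · nlinarith [mul_le_mul_of_nonneg_right hpot (sub_pos.mpr hgt).le]

end IsGreedyRun

end Greedy

end GreedyDispersion

open Finset GreedyDispersion in
theorem greedy_modular_dispersion_quarter_approx_general
    {ι : Type*} [DecidableEq ι] (E : Finset ι) (d m K : ℕ)
    (θ : Fin d → ℝ) (β : Fin m → ℝ)
    (R : Fin d → Finset ι → ℝ)
    (hR : ∀ i (A : Finset ι), R i A = ∑ a ∈ A, R i {a})
    (h : Fin m → ι → ι → ℝ)
    (hsymm : ∀ i a b, h i a b = h i b a)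
    (hdiag : ∀ i a, h i a a = 0)
    (htri : ∀ i a b c, h i a c ≤ h i a b + h i b c)
    (V : Fin m → Finset ι → ℝ)
    (hV : ∀ i (A : Finset ι), V i A = (∑ a ∈ A, ∑ b ∈ A, h i a b) / 2)
    (F : Finset ι → ℝ)
    (hF : ∀ A : Finset ι, F A = ∑ i, θ i * R i A + ∑ i, β i * V i A)
    (hθR : ∀ a ∈ E, 0 ≤ ∑ i, θ i * R i {a})
    (hβ : ∀ i, 0 ≤ β i)
    (g : ℕ → ι) (A : ℕ → Finset ι)
    (hA0 : A 0 = ∅)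
    (hAstep : ∀ k < K, A (k + 1) = insert (g k) (A k))
    (hmem : ∀ k < K, g k ∈ E \ A k)
    (hgreedy : ∀ k < K, ∀ b ∈ E \ A k,
      (∑ i, θ i * R i {b}) + ∑ i, β i * ∑ j ∈ A k, h i b j
        ≤ (∑ i, θ i * R i {g k}) + ∑ i, β i * ∑ j ∈ A k, h i (g k) j) :
    ∀ B ⊆ E, B.card ≤ K → (1 / 4 : ℝ) * F B ≤ F (A K) := by
  intro B hBE hBK
  set L : ι → ℝ := fun a => ∑ i, θ i * R i {a}
  set D : ι → ι → ℝ := fun a b => ∑ i, β i * h i a b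
  have hD : IsPseudometric D :=
    IsPseudometric.weightedSum hβ fun i => ⟨hsymm i, hdiag i, htri i⟩
  have hFu : ∀ S, F S = utility L D S := fun S => by
    simp only [hF, hR _ S, hV, ← mul_div_assoc, ← sum_div, sum_mul_sum_eq_sum_sum_mul, utility,
      crossSum, L, D]
  have hrun : IsGreedyRun L D E K g A := ⟨hA0, hAstep, hmem, fun k hk b hb => by
    simpa only [marginalGain, L, D, sum_mul_sum_eq_sum_sum_mul] using hgreedy k hk b hb⟩
  rw [hFu, hFu]
  linarith [hrun.utility_le_three_mul hθR hD hBE hBK, hrun.utility_nonneg hθR hD.nonneg]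

/-- Greedy algorithm for maximizing a combination of modular functions and
dispersion functions achieves a 1/4 approximation ratio.

`E` is a finite ground set, `θ ∈ ℝ^d`, `β ∈ ℝ^m`, `R i` are modular functions
(`R i A = ∑ a ∈ A, R i {a}`), `h i` are distance metrics with associated dispersion
functions `V i A = (∑ a ∈ A, ∑ b ∈ A, h i a b) / 2` (the sum over unordered pairs of
distinct elements of `A`, given symmetry and vanishing diagonal).
The utility is `F A = ∑ i, θ i * R i A + ∑ i, β i * V i A`.
The greedy sequence is given by elements `g k` and partial sets `A k` with `A 0 = ∅`,
`A (k+1) = insert (g k) (A k)`, where each `g k ∈ E \ A k` maximizes the marginal gain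
`η^T Δ(a | A k) = ∑ i, θ i * R i {a} + ∑ i, β i * ∑ j ∈ A k, h i a j`.
If `∑ i, θ i * R i {a} ≥ 0` for every `a ∈ E` and `β` is componentwise nonnegative, then
`F (A K) ≥ (1/4) * F B` for every `B ⊆ E` with `|B| ≤ K`. -/
theorem greedy_modular_dispersion_quarter_approx
    {ι : Type*} [DecidableEq ι] (E : Finset ι) (d m K : ℕ)
    (θ : Fin d → ℝ) (β : Fin m → ℝ)
    (R : Fin d → Finset ι → ℝ)
    (hR : ∀ i (A : Finset ι), R i A = ∑ a ∈ A, R i {a})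
    (h : Fin m → ι → ι → ℝ)
    (hnonneg : ∀ i a b, 0 ≤ h i a b)
    (hsymm : ∀ i a b, h i a b = h i b a)
    (hdiag : ∀ i a, h i a a = 0)
    (htri : ∀ i a b c, h i a c ≤ h i a b + h i b c)
    (V : Fin m → Finset ι → ℝ)
    (hV : ∀ i (A : Finset ι), V i A = (∑ a ∈ A, ∑ b ∈ A, h i a b) / 2)
    (F : Finset ι → ℝ)
    (hF : ∀ A : Finset ι, F A = ∑ i, θ i * R i A + ∑ i, β i * V i A)
    (hθR : ∀ a ∈ E, 0 ≤ ∑ i, θ i * R i {a})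
    (hβ : ∀ i, 0 ≤ β i)
    (g : ℕ → ι) (A : ℕ → Finset ι)
    (hA0 : A 0 = ∅)
    (hAstep : ∀ k < K, A (k + 1) = insert (g k) (A k))
    (hmem : ∀ k < K, g k ∈ E \ A k)
    (hgreedy : ∀ k < K, ∀ b ∈ E \ A k,
      (∑ i, θ i * R i {b}) + ∑ i, β i * ∑ j ∈ A k, h i b j
        ≤ (∑ i, θ i * R i {g k}) + ∑ i, β i * ∑ j ∈ A k, h i (g k) j) :
    ∀ B ⊆ E, B.card ≤ K → (1 / 4 : ℝ) * F B ≤ F (A K) :=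
  greedy_modular_dispersion_quarter_approx_general E d m K θ β R hR h hsymm hdiag htri V hV F hF hθR
    hβ g A hA0 hAstep hmem hgreedy
end

section
/- Let p ≥ 1 and λ > 0, and let n, K be positive integers. Let ζ_{t,k} ∈ ℝ^p for t = 1, …, n and k = 1, …, K be vectors with ‖ζ_{t,k}‖_2 ≤ 1, and define Φ_t = λ I_p + Σ_{i=1}^{t−1} Σ_{k=1}^{K} ζ_{i,k} ζ_{i,k}^T for each t. Then Σ_{t=1}^{n} Σ_{k=1}^{K} √(ζ_{t,k}^T Φ_t^{−1} ζ_{t,k}) ≤ K · √( n · p · log(1 + nK/(p·λ)) / ( λ · log(1 + 1/λ) ) ). -/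
/-!
Elliptical potential argument. Write `q t k = ζ t kᵀ Φ t⁻¹ ζ t k`. By the matrix determinant
lemma, and since `det` only grows under positive semidefinite updates,
`det Φ (t + 1) ≥ det Φ t * (1 + q t k)` for every `k`. Since `Φ t ⪰ λ I`, `q t k ≤ 1 / λ`, and on
`[0, 1 / λ]` concavity of `log` gives `λ log (1 + 1 / λ) q ≤ log (1 + q)`. Hence every `q t k` is
at most the `t`-th increment of `log det Φ / (λ log (1 + 1 / λ))`. Summing square roots,
Cauchy–Schwarz and telescoping leave `log det Φ n - log det (λ I)`, which AM–GM on the eigenvalues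
bounds by `p log (1 + n K / (p λ))` because the trace of `Φ n` is at most `p λ + n K`.
-/

open Finset Matrix

namespace Real

lemma prod_le_sum_div_card_pow {ι : Type*} (s : Finset ι) {z : ι → ℝ} (hz : ∀ i ∈ s, 0 ≤ z i) :
    ∏ i ∈ s, z i ≤ ((∑ i ∈ s, z i) / #s) ^ #s := by
  rcases s.eq_empty_or_nonempty with rfl | hs
  · simp
  have hs' : (#s : ℝ) ≠ 0 := Nat.cast_ne_zero.2 hs.card_pos.ne'
  have amgm := geom_mean_le_arith_mean_weighted s (fun _ => (#s : ℝ)⁻¹) z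
    (fun _ _ => by positivity) (by simp [hs']) hz
  calc ∏ i ∈ s, z i = (∏ i ∈ s, z i ^ (#s : ℝ)⁻¹) ^ #s := by
        rw [← prod_pow]
        exact prod_congr rfl fun i hi => (rpow_inv_natCast_pow (hz i hi) hs.card_pos.ne').symm
    _ ≤ (∑ i ∈ s, (#s : ℝ)⁻¹ * z i) ^ #s :=
        pow_le_pow_left₀ (prod_nonneg fun i hi => rpow_nonneg (hz i hi) _) amgm _
    _ = ((∑ i ∈ s, z i) / #s) ^ #s := by rw [← mul_sum, inv_mul_eq_div]

lemma sum_sqrt_le_sqrt_card_mul_sum {ι : Type*} (s : Finset ι) {f : ι → ℝ}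
    (hf : ∀ i, 0 ≤ f i) :
    ∑ i ∈ s, √(f i) ≤ √(#s * ∑ i ∈ s, f i) := by
  simpa [sqrt_mul (Nat.cast_nonneg _)] using
    sum_sqrt_mul_sqrt_le s (f := fun _ => 1) (fun _ => zero_le_one) hf

lemma mul_log_one_add_le_log_one_add_mul {s a : ℝ} (ha : -1 < a) (hs₀ : 0 ≤ s) (hs₁ : s ≤ 1) :
    s * log (1 + a) ≤ log (1 + s * a) := by
  rw [← log_rpow (by linarith)]
  exact log_le_log (rpow_pos_of_pos (by linarith) s)
    (rpow_one_add_le_one_add_mul_self ha.le hs₀ hs₁)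

lemma sum_sum_sqrt_le_of_mul_le_sub {n K : ℕ} {q : Fin n → Fin K → ℝ} {D : ℕ → ℝ} {c : ℝ}
    (hc : 0 < c) (hD : ∀ t : Fin n, D t ≤ D (t + 1)) (hq : ∀ t k, c * q t k ≤ D (t + 1) - D t) :
    ∑ t, ∑ k, √(q t k) ≤ K * √(n * (D n - D 0) / c) := by
  calc ∑ t, ∑ k, √(q t k) ≤ ∑ t : Fin n, ∑ _k : Fin K, √((D (t + 1) - D t) / c) :=
        sum_le_sum fun t _ => sum_le_sum fun k _ => sqrt_le_sqrt ((le_div_iff₀' hc).2 (hq t k))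
    _ = K * ∑ t : Fin n, √((D (t + 1) - D t) / c) := by simp [mul_sum]
    _ ≤ K * √(n * ∑ t : Fin n, (D (t + 1) - D t) / c) := by
        gcongr
        simpa using sum_sqrt_le_sqrt_card_mul_sum univ fun t =>
          div_nonneg (sub_nonneg.2 (hD t)) hc.le
    _ = K * √(n * (D n - D 0) / c) := by
        rw [← sum_div, Fin.sum_univ_eq_sum_range (fun t => D (t + 1) - D t), sum_range_sub,
          mul_div_assoc]

end Real

namespace Matrix

variable {m : Type*}

lemma posDef_of_posSemidef_sub_smul_one [DecidableEq m] {A : Matrix m m ℝ} {lam : ℝ}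
    (hlam : 0 < lam) (hA : (A - lam • 1).PosSemidef) : A.PosDef := by
  simpa using (PosDef.one.smul hlam).add_posSemidef hA

variable [Fintype m]

lemma posSemidef_vecMulVec_self (v : m → ℝ) : (vecMulVec v v).PosSemidef := by
  simpa using posSemidef_vecMulVec_self_star v

lemma posSemidef_sum_vecMulVec {ι : Type*} (s : Finset ι) (u : ι → m → ℝ) :
    (∑ i ∈ s, vecMulVec (u i) (u i)).PosSemidef :=
  posSemidef_sum s fun i _ => posSemidef_vecMulVec_self (u i)

variable [DecidableEq m]

lemma det_add_vecMulVec {α : Type*} [CommRing α] {A : Matrix m m α} (hA : IsUnit A.det)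
    (u v : m → α) : (A + vecMulVec u v).det = A.det * (1 + v ⬝ᵥ A⁻¹ *ᵥ u) := by
  rw [vecMulVec_eq Unit, det_add_replicateCol_mul_replicateRow hA, Matrix.mul_assoc,
    ← replicateCol_mulVec, det_unique (n := Unit)]
  simp

lemma PosSemidef.det_le_trace_div_card_pow {A : Matrix m m ℝ} (hA : A.PosSemidef) :
    A.det ≤ (A.trace / Fintype.card m) ^ Fintype.card m := by
  rw [hA.isHermitian.det_eq_prod_eigenvalues, hA.isHermitian.trace_eq_sum_eigenvalues]
  simpa using Real.prod_le_sum_div_card_pow univ fun i _ => hA.eigenvalues_nonneg i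

lemma PosDef.det_le_det_add_sum_vecMulVec {ι : Type*} (s : Finset ι) (u : ι → m → ℝ)
    {A : Matrix m m ℝ} (hA : A.PosDef) : A.det ≤ (A + ∑ i ∈ s, vecMulVec (u i) (u i)).det := by
  induction s using Finset.cons_induction generalizing A with
  | empty => simp
  | cons a s ha ih =>
    rw [sum_cons, ← add_assoc]
    refine le_trans ?_ (ih (hA.add_posSemidef (posSemidef_vecMulVec_self (u a))))
    rw [det_add_vecMulVec hA.det_pos.ne'.isUnit, le_mul_iff_one_le_right hA.det_pos,
      le_add_iff_nonneg_right]
    simpa using hA.inv.posSemidef.dotProduct_mulVec_nonneg (u a)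

lemma PosDef.det_mul_one_add_le_det_add_sum_vecMulVec {ι : Type*} {s : Finset ι}
    {u : ι → m → ℝ} {k : ι} (hk : k ∈ s) {A : Matrix m m ℝ} (hA : A.PosDef) :
    A.det * (1 + u k ⬝ᵥ A⁻¹ *ᵥ u k) ≤ (A + ∑ i ∈ s, vecMulVec (u i) (u i)).det := by
  classical
  rw [← add_sum_erase s _ hk, ← add_assoc, ← det_add_vecMulVec hA.det_pos.ne'.isUnit]
  exact (hA.add_posSemidef (posSemidef_vecMulVec_self _)).det_le_det_add_sum_vecMulVec _ _

lemma mul_dotProduct_inv_mulVec_le_one {A : Matrix m m ℝ} (hA : IsUnit A.det) {lam : ℝ}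
    (hlam : 0 ≤ lam) (hAlam : (A - lam • 1).PosSemidef) {v : m → ℝ} (hv : v ⬝ᵥ v ≤ 1) :
    lam * (v ⬝ᵥ A⁻¹ *ᵥ v) ≤ 1 := by
  -- With `y = A⁻¹ v`: `0 ≤ ‖v - λ y‖² ≤ 1 - 2 λ vᵀy + λ yᵀA y = 1 - λ vᵀy`.
  set y := A⁻¹ *ᵥ v
  have hAy : A *ᵥ y = v := by rw [mulVec_mulVec, mul_nonsing_inv _ hA, one_mulVec]
  have hy : lam * (y ⬝ᵥ y) ≤ y ⬝ᵥ v := by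
    have := hAlam.dotProduct_mulVec_nonneg y
    simp only [star_trivial, sub_mulVec, dotProduct_sub, hAy, smul_mulVec, one_mulVec,
      dotProduct_smul, smul_eq_mul] at this
    linarith
  have hsq : 0 ≤ (v - lam • y) ⬝ᵥ (v - lam • y) := by
    simpa using dotProduct_star_self_nonneg (v - lam • y)
  simp only [sub_dotProduct, dotProduct_sub, smul_dotProduct, dotProduct_smul, smul_eq_mul,
    dotProduct_comm y v] at hsq hy
  nlinarith [mul_le_mul_of_nonneg_left hy hlam]

lemma mul_dotProduct_inv_mulVec_le_log_det_add_sum_sub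
    {A : Matrix m m ℝ} {lam : ℝ} (hlam : 0 < lam) (hA : (A - lam • 1).PosSemidef)
    {ι : Type*} {s : Finset ι} {u : ι → m → ℝ} {k : ι} (hk : k ∈ s) (hu : u k ⬝ᵥ u k ≤ 1) :
    lam * Real.log (1 + 1 / lam) * (u k ⬝ᵥ A⁻¹ *ᵥ u k) ≤
      Real.log (A + ∑ i ∈ s, vecMulVec (u i) (u i)).det - Real.log A.det := by
  have hApd := posDef_of_posSemidef_sub_smul_one hlam hA
  set q := u k ⬝ᵥ A⁻¹ *ᵥ u k
  have hq₀ : 0 ≤ q := by simpa using hApd.inv.posSemidef.dotProduct_mulVec_nonneg (u k)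
  have hq₁ : lam * q ≤ 1 :=
    mul_dotProduct_inv_mulVec_le_one hApd.det_pos.ne'.isUnit hlam.le hA hu
  calc lam * Real.log (1 + 1 / lam) * q = lam * q * Real.log (1 + 1 / lam) := by ring
    _ ≤ Real.log (1 + lam * q * (1 / lam)) :=
        Real.mul_log_one_add_le_log_one_add_mul (by linarith [one_div_pos.2 hlam])
          (by positivity) hq₁
    _ = Real.log (A.det * (1 + q)) - Real.log A.det := by
        rw [Real.log_mul hApd.det_pos.ne' (by linarith), add_sub_cancel_left]
        field_simp
    _ ≤ _ := sub_le_sub_right (Real.log_le_log (by have := hApd.det_pos; positivity)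
        (hApd.det_mul_one_add_le_det_add_sum_vecMulVec hk)) _

lemma log_det_smul_one_add_sum_vecMulVec_sub_le {lam : ℝ}
    (hlam : 0 < lam) {ι : Type*} (s : Finset ι) (u : ι → m → ℝ) (hu : ∀ i ∈ s, u i ⬝ᵥ u i ≤ 1) :
    Real.log (lam • 1 + ∑ i ∈ s, vecMulVec (u i) (u i)).det - Real.log (lam • 1 : Matrix m m ℝ).det
      ≤ Fintype.card m * Real.log (1 + #s / (Fintype.card m * lam)) := by
  set N := Fintype.card m
  set A := lam • 1 + ∑ i ∈ s, vecMulVec (u i) (u i)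
  have hA : A.PosDef :=
    posDef_of_posSemidef_sub_smul_one hlam (by simpa [A] using posSemidef_sum_vecMulVec s u)
  have htr : A.trace ≤ lam * N + #s := by
    simp only [A, trace_add, trace_smul, trace_one, trace_sum, trace_vecMulVec, smul_eq_mul]
    exact add_le_add_right (by simpa using sum_le_card_nsmul s _ 1 hu) _
  have hdet : A.det ≤ (lam * (1 + #s / (N * lam))) ^ N := by
    refine hA.posSemidef.det_le_trace_div_card_pow.trans (pow_le_pow_left₀
      (div_nonneg hA.posSemidef.trace_nonneg N.cast_nonneg) ?_ N)
    calc A.trace / N ≤ (lam * N + #s) / N := div_le_div_of_nonneg_right htr N.cast_nonneg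
      _ = lam * (N / N) + #s / N := by ring
      _ ≤ lam + #s / N := by gcongr; exact mul_le_of_le_one_right hlam.le (div_self_le_one _)
      _ = lam * (1 + #s / (N * lam)) := by field_simp
  calc Real.log A.det - Real.log (lam • 1 : Matrix m m ℝ).det
      ≤ Real.log ((lam * (1 + #s / (N * lam))) ^ N) - Real.log (lam ^ N) := by
        rw [det_smul, det_one, mul_one]
        gcongr
        exact hA.det_pos
    _ = N * Real.log (1 + #s / (N * lam)) := by
        rw [Real.log_pow, Real.log_pow, Real.log_mul hlam.ne' (by positivity)]
        ring

end Matrix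

section RegularizedGram

variable {m : Type*} [DecidableEq m] {n K : ℕ}

/-- The design matrix after the first `t` rounds; `t` ranges over `ℕ` so that the matrix after
the last round, `regularizedGram lam ζ n`, is available too. -/
def regularizedGram (lam : ℝ) (ζ : Fin n → Fin K → m → ℝ) (t : ℕ) : Matrix m m ℝ :=
  lam • 1 + ∑ i ∈ univ.filter (fun i : Fin n => (i : ℕ) < t), ∑ k, vecMulVec (ζ i k) (ζ i k)

variable {lam : ℝ} {ζ : Fin n → Fin K → m → ℝ}

lemma regularizedGram_zero : regularizedGram lam ζ 0 = lam • 1 := by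
  simp [regularizedGram]

lemma regularizedGram_succ (t : Fin n) :
    regularizedGram lam ζ (t + 1) = regularizedGram lam ζ t + ∑ k, vecMulVec (ζ t k) (ζ t k) := by
  have : univ.filter (fun i : Fin n => (i : ℕ) < t + 1) =
      insert t (univ.filter (fun i : Fin n => (i : ℕ) < t)) := by
    ext i
    simp only [mem_filter, mem_univ, true_and, mem_insert, Fin.ext_iff]
    omega
  rw [regularizedGram, this, sum_insert (by simp), regularizedGram]
  abel

lemma regularizedGram_of_le {t : ℕ} (ht : n ≤ t) :
    regularizedGram lam ζ t = lam • 1 + ∑ x : Fin n × Fin K, vecMulVec (ζ x.1 x.2) (ζ x.1 x.2) := by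
  rw [regularizedGram, filter_true_of_mem fun i _ => i.2.trans_le ht, Fintype.sum_prod_type]

lemma posSemidef_regularizedGram_sub_smul_one [Fintype m] (t : ℕ) :
    (regularizedGram lam ζ t - lam • 1).PosSemidef := by
  simpa [regularizedGram] using posSemidef_sum _ fun i _ => posSemidef_sum_vecMulVec univ (ζ i)

theorem sum_sum_sqrt_dotProduct_inv_regularizedGram_le [Fintype m] (hlam : 0 < lam)
    (hζ : ∀ t k, ζ t k ⬝ᵥ ζ t k ≤ 1) :
    ∑ t, ∑ k, √(ζ t k ⬝ᵥ (regularizedGram lam ζ t)⁻¹ *ᵥ ζ t k) ≤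
      K * √(n * (Fintype.card m * Real.log (1 + n * K / (Fintype.card m * lam)))
        / (lam * Real.log (1 + 1 / lam))) := by
  have hc : 0 < lam * Real.log (1 + 1 / lam) :=
    mul_pos hlam (Real.log_pos (lt_add_of_pos_right 1 (one_div_pos.2 hlam)))
  have hG t := posSemidef_regularizedGram_sub_smul_one (lam := lam) (ζ := ζ) t
  calc _ ≤ K * √(n * (Real.log (regularizedGram lam ζ n).det -
        Real.log (regularizedGram lam ζ 0).det) / (lam * Real.log (1 + 1 / lam))) := by
        refine Real.sum_sum_sqrt_le_of_mul_le_sub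
          (D := fun t => Real.log (regularizedGram lam ζ t).det) hc
          (fun t => ?_) (fun t k => ?_) <;> rw [regularizedGram_succ]
        · have hGt := posDef_of_posSemidef_sub_smul_one hlam (hG t)
          exact Real.log_le_log hGt.det_pos (hGt.det_le_det_add_sum_vecMulVec _ _)
        · exact mul_dotProduct_inv_mulVec_le_log_det_add_sum_sub hlam (hG t) (mem_univ k) (hζ t k)
    _ ≤ _ := by
        rw [regularizedGram_of_le le_rfl, regularizedGram_zero]
        gcongr
        simpa using log_det_smul_one_add_sum_vecMulVec_sub_le hlam univ
          (fun x : Fin n × Fin K => ζ x.1 x.2) fun x _ => hζ x.1 x.2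

end RegularizedGram

theorem sum_sqrt_quadratic_inverse_le_general
    (p : ℕ) (lam : ℝ) (hlam : 0 < lam)
    (n K : ℕ)
    (ζ : Fin n → Fin K → (Fin p → ℝ))
    (hζ : ∀ t k, Real.sqrt (ζ t k ⬝ᵥ ζ t k) ≤ 1)
    (Φ : Fin n → Matrix (Fin p) (Fin p) ℝ)
    (hΦ : ∀ t, Φ t = lam • (1 : Matrix (Fin p) (Fin p) ℝ)
      + ∑ i ∈ Finset.univ.filter (fun i => i < t), ∑ k, vecMulVec (ζ i k) (ζ i k)) :
    ∑ t, ∑ k, Real.sqrt (ζ t k ⬝ᵥ (Φ t)⁻¹ *ᵥ ζ t k)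
      ≤ K * Real.sqrt ((n * p * Real.log (1 + n * K / (p * lam)))
          / (lam * Real.log (1 + 1 / lam))) := by
  have hΦG t : Φ t = regularizedGram lam ζ t := by simp [hΦ, regularizedGram]
  simpa [hΦG, mul_assoc] using
    sum_sum_sqrt_dotProduct_inv_regularizedGram_le hlam fun t k => Real.sqrt_le_one.mp (hζ t k)

/-- Bound on the sum of confidence widths.  For vectors `ζ t k ∈ ℝ^p`
(`t = 0, …, n-1`, `k = 0, …, K-1`) of Euclidean norm at most 1, and
`Φ t = λ • I + ∑_{i < t} ∑_k (ζ i k)(ζ i k)ᵀ`, we have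
`∑_t ∑_k √(ζ t kᵀ (Φ t)⁻¹ ζ t k) ≤ K √(n p log(1 + nK/(pλ)) / (λ log(1 + 1/λ)))`. -/
theorem sum_sqrt_quadratic_inverse_le
    (p : ℕ) (hp : 1 ≤ p) (lam : ℝ) (hlam : 0 < lam)
    (n K : ℕ) (hn : 0 < n) (hK : 0 < K)
    (ζ : Fin n → Fin K → (Fin p → ℝ))
    (hζ : ∀ t k, Real.sqrt (ζ t k ⬝ᵥ ζ t k) ≤ 1)
    (Φ : Fin n → Matrix (Fin p) (Fin p) ℝ)
    (hΦ : ∀ t, Φ t = lam • (1 : Matrix (Fin p) (Fin p) ℝ)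
      + ∑ i ∈ Finset.univ.filter (fun i => i < t), ∑ k, vecMulVec (ζ i k) (ζ i k)) :
    ∑ t, ∑ k, Real.sqrt (ζ t k ⬝ᵥ (Φ t)⁻¹ *ᵥ ζ t k)
      ≤ K * Real.sqrt ((n * p * Real.log (1 + n * K / (p * lam)))
          / (lam * Real.log (1 + 1 / lam))) :=
  sum_sqrt_quadratic_inverse_le_general p lam hlam n K ζ hζ Φ hΦ
end

section
/- Fix p ≥ 1, a positive definite matrix Φ ∈ ℝ^{p×p}, vectors η̂, η* ∈ ℝ^p, a scalar α ≥ 0, a constant γ ∈ (0, 1], a finite candidate set E_t, and a positive integer K ≤ |E_t|. Let ζ be a map assigning to each nonempty ordered list A of distinct elements of E_t a vector ζ_A ∈ ℝ^p. For each such list define w̄(A) = η*^T ζ_A, U(A) = clamp_{[0,1]}( η̂^T ζ_A + α √(ζ_A^T Φ^{−1} ζ_A) ), and L(A) = clamp_{[0,1]}( η̂^T ζ_A − α √(ζ_A^T Φ^{−1} ζ_A) ), and for a weight function g and a list A = (a_1, …, a_l) define f(A, g) = Σ_{k=1}^{l} g(A^k), where A^k is the length-k prefix of A. Assume the good event: L(A)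 ≤ w̄(A) ≤ U(A) for every nonempty ordered list A of distinct elements of E_t. Let A* be a K-element ordered list of distinct elements of E_t maximizing f(·, w̄) over all such lists, and let A_t be a K-element ordered list of distinct elements of E_t with f(A_t, U) ≥ γ · max over all K-element ordered lists B of f(B, U). Then f(A*, w̄) − f(A_t, w̄)/γ ≤ (2α/γ) · Σ_{k=1}^{K} √( ζ_{A_t^k}^T Φ^{−1} ζ_{A_t^k} ). -/
open Matrix

/-- Per-step regret decomposition under the good event.  Ordered lists of
distinct elements of the candidate set `Et` are modelled as `List`s that are nonempty,
nodup and contained in `Et`; `A.take k` is the length-`k` prefix `A^k`.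
`w̄ A = η*ᵀ ζ_A`, `U A = clamp₀₁(η̂ᵀ ζ_A + α √(ζ_Aᵀ Φ⁻¹ ζ_A))`,
`L A = clamp₀₁(η̂ᵀ ζ_A - α √(ζ_Aᵀ Φ⁻¹ ζ_A))`, and `f A g = ∑_{k=1}^{|A|} g (A^k)`.
Under the good event `L ≤ w̄ ≤ U`, if `A*` maximizes `f(·, w̄)` over `K`-permutations of
`Et` and `At` satisfies `f(At, U) ≥ γ · max_B f(B, U)`, then
`f(A*, w̄) - f(At, w̄)/γ ≤ (2α/γ) ∑_{k=1}^K √(ζ_{At^k}ᵀ Φ⁻¹ ζ_{At^k})`. -/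
theorem per_step_regret_le_confidence_width
    {ι : Type*} (p : ℕ) (hp : 1 ≤ p)
    (Φ : Matrix (Fin p) (Fin p) ℝ) (hΦ : Φ.PosDef)
    (ηhat ηstar : Fin p → ℝ)
    (a : ℝ) (ha : 0 ≤ a)
    (γ : ℝ) (hγ0 : 0 < γ) (hγ1 : γ ≤ 1)
    (Et : Finset ι) (K : ℕ) (hK : 0 < K) (hKE : K ≤ Et.card)
    (ζ : List ι → (Fin p → ℝ))
    (wbar U L : List ι → ℝ)
    (hw : ∀ A : List ι, wbar A = ηstar ⬝ᵥ ζ A)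
    (hU : ∀ A : List ι,
      U A = max 0 (min 1 (ηhat ⬝ᵥ ζ A + a * Real.sqrt (ζ A ⬝ᵥ Φ⁻¹ *ᵥ ζ A))))
    (hL : ∀ A : List ι,
      L A = max 0 (min 1 (ηhat ⬝ᵥ ζ A - a * Real.sqrt (ζ A ⬝ᵥ Φ⁻¹ *ᵥ ζ A))))
    (f : List ι → (List ι → ℝ) → ℝ)
    (hf : ∀ (A : List ι) (g : List ι → ℝ),
      f A g = ∑ k ∈ Finset.Icc 1 A.length, g (A.take k))
    (good : ∀ A : List ι, A ≠ [] → A.Nodup → (∀ x ∈ A, x ∈ Et) →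
      L A ≤ wbar A ∧ wbar A ≤ U A)
    (Astar At : List ι)
    (hAstarLen : Astar.length = K) (hAstarNodup : Astar.Nodup)
    (hAstarMem : ∀ x ∈ Astar, x ∈ Et)
    (hAstarOpt : ∀ B : List ι, B.length = K → B.Nodup → (∀ x ∈ B, x ∈ Et) →
      f B wbar ≤ f Astar wbar)
    (hAtLen : At.length = K) (hAtNodup : At.Nodup)
    (hAtMem : ∀ x ∈ At, x ∈ Et)
    (hAtApprox : ∀ B : List ι, B.length = K → B.Nodup → (∀ x ∈ B, x ∈ Et) →
      γ * f B U ≤ f At U) :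
    f Astar wbar - f At wbar / γ
      ≤ (2 * a / γ) * ∑ k ∈ Finset.Icc 1 K,
          Real.sqrt (ζ (At.take k) ⬝ᵥ Φ⁻¹ *ᵥ ζ (At.take k)) := by
  -- prefixes of a good list satisfy the good event
  have hgood : ∀ (A : List ι), A.length = K → A.Nodup → (∀ x ∈ A, x ∈ Et) →
      ∀ k ∈ Finset.Icc 1 K, L (A.take k) ≤ wbar (A.take k) ∧ wbar (A.take k) ≤ U (A.take k) := by
    intro A hlen hnd hmem k hk
    simp only [Finset.mem_Icc] at hk
    apply good
    · intro h
      have := congrArg List.length h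
      simp [hlen] at this
      omega
    · exact hnd.sublist (List.take_sublist k A)
    · intro x hx
      exact hmem x (List.mem_of_mem_take hx)
  have h1 : f Astar wbar ≤ f Astar U := by
    rw [hf, hf, hAstarLen]
    apply Finset.sum_le_sum
    intro k hk
    exact (hgood Astar hAstarLen hAstarNodup hAstarMem k hk).2
  have h2 : γ * f Astar U ≤ f At U := hAtApprox Astar hAstarLen hAstarNodup hAstarMem
  set S := ∑ k ∈ Finset.Icc 1 K, Real.sqrt (ζ (At.take k) ⬝ᵥ Φ⁻¹ *ᵥ ζ (At.take k)) with hS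
  have h3 : f At U ≤ f At wbar + 2 * a * S := by
    rw [hf, hf, hAtLen, hS, Finset.mul_sum, ← Finset.sum_add_distrib]
    apply Finset.sum_le_sum
    intro k hk
    have hg := hgood At hAtLen hAtNodup hAtMem k hk
    have hs : (0:ℝ) ≤ a * Real.sqrt (ζ (At.take k) ⬝ᵥ Φ⁻¹ *ᵥ ζ (At.take k)) :=
      mul_nonneg ha (Real.sqrt_nonneg _)
    have hUL : U (At.take k) ≤ L (At.take k)
        + 2 * a * Real.sqrt (ζ (At.take k) ⬝ᵥ Φ⁻¹ *ᵥ ζ (At.take k)) := by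
      rw [hU, hL]
      rcases le_total (ηhat ⬝ᵥ ζ (At.take k) + a * Real.sqrt (ζ (At.take k) ⬝ᵥ Φ⁻¹ *ᵥ ζ (At.take k))) 1 with h|h <;>
      rcases le_total (ηhat ⬝ᵥ ζ (At.take k) - a * Real.sqrt (ζ (At.take k) ⬝ᵥ Φ⁻¹ *ᵥ ζ (At.take k))) 1 with h'|h' <;>
      simp only [max_def, min_def] <;> split_ifs <;> linarith
    linarith [hg.1, hg.2]
  have key : γ * f Astar wbar ≤ f At wbar + 2 * a * S := by
    have := mul_le_mul_of_nonneg_left h1 hγ0.le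
    linarith
  have h4 : f At wbar / γ + (2 * a / γ) * S = (f At wbar + 2 * a * S) / γ := by
    field_simp
  have h5 : f Astar wbar ≤ (f At wbar + 2 * a * S) / γ := by
    rw [le_div_iff₀ hγ0]; linarith
  linarith
end
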